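/- Let A be the (n+1)-dimensional n-ary algebra of type (C_2) over a field F of characteristic zero, with [e_1,...,e_{n-1},e_{n+1}] = e_n + β e_{n+1} (β ≠ 0), [e_1,...,e_n] = e_{n+1}, other basic products zero. Let φ be a δ-derivation with δ = -1, matrix entries β_{ij}. Then β_{n+1,n} = β_{n,n+1} = 0 and β_{nn} = β_{n+1,n+1} = -(1/2)·Σ_{i=1}^{n-1} β_{ii}. -/

import Mathlib

/-!
Apply the δ-derivation identity to the two basic products that are nonzero, those omitting
`e_n` and `e_{n+1}`, and expand each `φ(e_j)` in the basis. Since the product is alternating,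
only two kinds of summands survive: the diagonal coefficient of `φ(e_j)` times the product
itself, and its coefficient on the omitted vector times a permutation of another basic
product, which is nonzero only when `e_j` is the other member of the pair `e_n, e_{n+1}`.
This leaves two vector identities, hence four scalar equations in `β_{n,n+1}`, `β_{n+1,n}`,
`β_{nn}`, `β_{n+1,n+1}` and the trace of `φ`. Since `β ≠ 0` and `2 ≠ 0`, they force both
off-diagonal entries and the trace to vanish and the two diagonal entries to coincide.
-/

open Function

namespace Fin

theorem update_castSucc_succAbove {n : ℕ} (k : Fin n) :
    update k.castSucc.succAbove k k.castSucc = k.succ.succAbove := by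
  funext i
  rcases eq_or_ne i k with rfl | hik
  · simp
  · rw [update_of_ne hik]
    rcases hik.lt_or_gt with h | h
    · rw [succAbove_of_castSucc_lt _ _ (by simpa using h),
        succAbove_of_castSucc_lt _ _ (by simpa [castSucc_lt_succ_iff] using h.le)]
    · rw [succAbove_of_le_castSucc _ _ (by simpa using h.le),
        succAbove_of_le_castSucc _ _ (by simpa [succ_le_castSucc_iff] using h)]

theorem update_succ_succAbove {n : ℕ} (k : Fin n) :
    update k.succ.succAbove k k.succ = k.castSucc.succAbove := by
  rw [← update_castSucc_succAbove, update_idem, ← succAbove_castSucc_self k, update_eq_self]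

theorem sum_filter_val_lt_sub_one {M : Type*} [AddCommGroup M] {n : ℕ} (hn : 1 ≤ n)
    (h : Fin (n + 1) → M) :
    ∑ j ∈ Finset.univ.filter (fun j : Fin (n + 1) => (j : ℕ) < n - 1), h j =
      ∑ j, h j - h ⟨n - 1, by omega⟩ - h (last n) := by
  have hcompl : Finset.univ.filter (fun j : Fin (n + 1) => ¬(j : ℕ) < n - 1) =
      {⟨n - 1, by omega⟩, last n} := by
    ext j
    simp only [Finset.mem_filter, Finset.mem_univ, true_and, Finset.mem_insert,
      Finset.mem_singleton, Fin.ext_iff, val_last]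
    omega
  rw [← Finset.sum_filter_add_sum_filter_not Finset.univ
    (fun j : Fin (n + 1) => (j : ℕ) < n - 1), hcompl,
    Finset.sum_pair (by simp [Fin.ext_iff]; omega)]
  abel

end Fin

namespace AlternatingMap

variable {R M N : Type*} [Semiring R] [AddCommMonoid M] [Module R M] [AddCommGroup N] [Module R N]
  {n : ℕ} (f : M [⋀^Fin n]→ₗ[R] N)

theorem map_comp_eq_zero_of_succAbove (v : Fin (n + 1) → M) {d : Fin (n + 1)}
    (hd : f (v ∘ d.succAbove) = 0) {u : Fin n → Fin (n + 1)} (hu : Injective u)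
    (hud : ∀ i, u i ≠ d) : f (v ∘ u) = 0 := by
  choose τ hτ using fun i => Fin.exists_succAbove_eq (hud i)
  have hτ_inj : Injective τ := fun i j h => hu (by rw [← hτ i, ← hτ j, h])
  let σ := Equiv.ofBijective τ (Finite.injective_iff_bijective.mp hτ_inj)
  have hvu : v ∘ u = (v ∘ d.succAbove) ∘ σ := funext fun i => by simp [σ, hτ]
  rw [hvu, f.map_perm, hd, smul_zero]

theorem map_update_succAbove_eq_zero (v : Fin (n + 1) → M) (c : Fin (n + 1)) (i : Fin n)
    (h : f (v ∘ (c.succAbove i).succAbove) = 0) :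
    f (update (v ∘ c.succAbove) i (v c)) = 0 := by
  rw [← comp_update]
  refine f.map_comp_eq_zero_of_succAbove v h ?_ fun j => ?_
  · intro j j' hjj'
    grind [update_apply, Fin.succAbove_ne, Fin.succAbove_right_inj]
  · rcases eq_or_ne j i with rfl | hj
    · simp [c.ne_succAbove j]
    · simp [hj, Fin.succAbove_right_injective.ne hj]

theorem map_update_basis_succAbove (b : Module.Basis (Fin (n + 1)) R M) (c : Fin (n + 1))
    (i : Fin n) (z : M) :
    f (update (b ∘ c.succAbove) i z) =
      b.repr z (c.succAbove i) • f (b ∘ c.succAbove) +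
        b.repr z c • f (update (b ∘ c.succAbove) i (b c)) := by
  have hrepeat : ∀ j, f (update (b ∘ c.succAbove) i (b (c.succAbove j))) =
      if i = j then f (b ∘ c.succAbove) else 0 := fun j => by
    split_ifs with hij
    · subst hij; exact congrArg f (update_eq_self i _)
    · exact f.map_update_self _ hij
  conv_lhs => rw [← b.sum_repr z, f.map_update_sum, Fin.sum_univ_succAbove _ c]
  simp only [f.map_update_smul, hrepeat, smul_ite, smul_zero, Finset.sum_ite_eq,
    Finset.mem_univ, if_true]
  abel

end AlternatingMap

def IsDeltaDerivation {F A : Type*} [CommRing F] [AddCommGroup A] [Module F A] {n : ℕ}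
    (f : A [⋀^Fin n]→ₗ[F] A) (δ : F) (φ : A →ₗ[F] A) : Prop :=
  ∀ x : Fin n → A, φ (f x) = δ • ∑ i, f (update x i (φ (x i)))

namespace IsDeltaDerivation

section CommRing

variable {F A : Type*} [CommRing F] [AddCommGroup A] [Module F A] {n : ℕ}
  {f : A [⋀^Fin n]→ₗ[F] A} {δ : F} {φ : A →ₗ[F] A} (b : Module.Basis (Fin (n + 1)) F A)

theorem apply_map_basis_succAbove (hφ : IsDeltaDerivation f δ φ) {c c' : Fin (n + 1)}
    {i₀ : Fin n} (hc' : c.succAbove i₀ = c') (hswap : update c.succAbove i₀ c = c'.succAbove)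
    (hf : ∀ d, d ≠ c → d ≠ c' → f (b ∘ d.succAbove) = 0) :
    φ (f (b ∘ c.succAbove)) =
      δ • ((Matrix.trace (LinearMap.toMatrix b b φ) - b.repr (φ (b c)) c) •
          f (b ∘ c.succAbove) + b.repr (φ (b c')) c • f (b ∘ c'.succAbove)) := by
  have hdiag : ∑ i, b.repr (φ ((b ∘ c.succAbove) i)) (c.succAbove i) =
      Matrix.trace (LinearMap.toMatrix b b φ) - b.repr (φ (b c)) c := by
    simp only [Matrix.trace, Matrix.diag, LinearMap.toMatrix_apply,
      Fin.sum_univ_succAbove _ c, add_sub_cancel_left, comp_apply]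
  have hoff : ∀ i ≠ i₀, f (update (b ∘ c.succAbove) i (b c)) = 0 := fun i hi =>
    f.map_update_succAbove_eq_zero b c i <| hf _ (c.succAbove_ne i) <| by
      rw [← hc']; exact Fin.succAbove_right_injective.ne hi
  rw [hφ, Finset.sum_congr rfl fun i _ => f.map_update_basis_succAbove b c i _,
    Finset.sum_add_distrib, ← Finset.sum_smul, hdiag,
    Finset.sum_eq_single i₀ (fun i _ hi => by rw [hoff i hi, smul_zero]) (by simp),
    ← comp_update, hswap, comp_apply, hc']

end CommRing

section Field

variable {F A : Type*} [Field F] [AddCommGroup A] [Module F A] {n : ℕ}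
  {f : A [⋀^Fin n]→ₗ[F] A} {φ : A →ₗ[F] A} (b : Module.Basis (Fin (n + 1)) F A)

-- With `k = n - 1`, `b k.castSucc` and `b k.succ` are the paper's `e_n` and `e_{n+1}`.
theorem typeC2_matrix_relations (hφ : IsDeltaDerivation f (-1) φ) (h2 : (2 : F) ≠ 0) {β : F}
    (hβ : β ≠ 0) (k : Fin n)
    (hm : f (b ∘ k.castSucc.succAbove) = b k.castSucc + β • b k.succ)
    (hl : f (b ∘ k.succ.succAbove) = b k.succ)
    (h0 : ∀ d, d ≠ k.castSucc → d ≠ k.succ → f (b ∘ d.succAbove) = 0) :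
    b.repr (φ (b k.succ)) k.castSucc = 0 ∧ b.repr (φ (b k.castSucc)) k.succ = 0 ∧
      Matrix.trace (LinearMap.toMatrix b b φ) = 0 ∧
      b.repr (φ (b k.castSucc)) k.castSucc = b.repr (φ (b k.succ)) k.succ := by
  have eL := hφ.apply_map_basis_succAbove b (Fin.succAbove_succ_self k)
    (Fin.update_succ_succAbove k) fun d h₁ h₂ => h0 d h₂ h₁
  have em := hφ.apply_map_basis_succAbove b (Fin.succAbove_castSucc_self k)
    (Fin.update_castSucc_succAbove k) h0
  rw [hl, hm] at eL
  rw [hm, hl, map_add, map_smul] at em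
  have hne : k.castSucc ≠ k.succ := Fin.castSucc_lt_succ.ne
  have eLm := congrArg (fun x => b.repr x k.castSucc) eL
  have eLl := congrArg (fun x => b.repr x k.succ) eL
  have emm := congrArg (fun x => b.repr x k.castSucc) em
  have eml := congrArg (fun x => b.repr x k.succ) em
  simp only [smul_add, neg_smul, one_smul, map_add, map_neg, map_smul, Module.Basis.repr_self,
    Finsupp.smul_single, smul_eq_mul, mul_one, Finsupp.single_sub, neg_sub, Finsupp.single_mul,
    Finsupp.coe_add, Finsupp.coe_sub, Finsupp.coe_neg, Finsupp.coe_smul, Pi.add_apply,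
    Pi.sub_apply, Pi.neg_apply, Pi.smul_apply, Finsupp.single_eq_same, Finsupp.mul_apply,
    Finsupp.single_eq_of_ne hne, Finsupp.single_eq_of_ne hne.symm, sub_self, mul_zero, neg_zero,
    add_zero, zero_add] at eLm eLl emm eml
  have hac : b.repr (φ (b k.succ)) k.castSucc = b.repr (φ (b k.castSucc)) k.succ :=
    mul_left_cancel₀ hβ (by linear_combination emm - eLl)
  have hc : b.repr (φ (b k.castSucc)) k.succ = 0 :=
    (mul_eq_zero.mp (by linear_combination eLm - hac : (2 : F) * _ = 0)).resolve_left h2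
  have ha : b.repr (φ (b k.succ)) k.castSucc = 0 := hac.trans hc
  have hT : Matrix.trace (LinearMap.toMatrix b b φ) = 0 := by linear_combination eLl - β * hc
  have hd : b.repr (φ (b k.castSucc)) k.castSucc = b.repr (φ (b k.succ)) k.succ :=
    mul_left_cancel₀ hβ (by linear_combination -eml + hc + ha + β * hT)
  exact ⟨ha, hc, hT, hd⟩

end Field

end IsDeltaDerivation

/-- Type `(C_2)`, `δ = -1` case: `β_{n+1,n} = β_{n,n+1} = 0` and
`β_{nn} = β_{n+1,n+1} = -(1/2)·Σ_{i=1}^{n-1} β_{ii}`. -/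
theorem antiderivation_C2_matrix
    {F A : Type*} [Field F] [CharZero F] [AddCommGroup A] [Module F A]
    {n : ℕ} (hn : 2 ≤ n)
    (b : Module.Basis (Fin (n + 1)) F A)
    (βc : F) (hβc : βc ≠ 0)
    (br : AlternatingMap F A A (Fin n))
    (hbr : ∀ i : Fin (n + 1),
      br (b ∘ i.succAbove) =
        if (i : ℕ) = n - 1 then b i + βc • b (Fin.last n)
        else if (i : ℕ) = n then b (Fin.last n)
        else 0)
    (φ : A →ₗ[F] A)
    (hφ : ∀ x : Fin n → A,
      φ (br x) = (-1 : F) • ∑ i, br (Function.update x i (φ (x i)))) :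
    b.repr (φ (b (Fin.last n))) ⟨n - 1, by omega⟩ = 0 ∧
    b.repr (φ (b ⟨n - 1, by omega⟩)) (Fin.last n) = 0 ∧
    b.repr (φ (b ⟨n - 1, by omega⟩)) ⟨n - 1, by omega⟩ =
      -(1 / 2) * ∑ k ∈ Finset.univ.filter (fun k : Fin (n + 1) => (k : ℕ) < n - 1),
        b.repr (φ (b k)) k ∧
    b.repr (φ (b (Fin.last n))) (Fin.last n) =
      -(1 / 2) * ∑ k ∈ Finset.univ.filter (fun k : Fin (n + 1) => (k : ℕ) < n - 1),
        b.repr (φ (b k)) k := by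
  set p : Fin n := ⟨n - 1, by omega⟩
  have hpl : p.succ = Fin.last n := Fin.ext (by simp [p]; omega)
  obtain ⟨ha, hc, htrace, hdiag⟩ :=
    IsDeltaDerivation.typeC2_matrix_relations b hφ two_ne_zero hβc p
      (by rw [hbr, if_pos (show (p.castSucc : ℕ) = n - 1 from rfl), hpl])
      (by rw [hpl, hbr, if_neg (by simp; omega), if_pos (Fin.val_last n)])
      (fun d hdm hdl => by
        rw [hbr, if_neg fun h : (d : ℕ) = n - 1 => hdm (Fin.ext h),
          if_neg fun h : (d : ℕ) = n => hdl (Fin.ext (by simp [p, h]; omega))])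
  have hpm : p.castSucc = ⟨n - 1, by omega⟩ := rfl
  rw [hpl, hpm] at ha hc hdiag
  simp only [Matrix.trace, Matrix.diag, LinearMap.toMatrix_apply] at htrace
  have hsum := Fin.sum_filter_val_lt_sub_one (by omega) fun k => b.repr (φ (b k)) k
  refine ⟨ha, hc, ?_, ?_⟩
  · linear_combination hsum / 2 + htrace / 2 + hdiag / 2
  · linear_combination hsum / 2 + htrace / 2 - hdiag / 2
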